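/- arXiv:1008.3310 — 3 statements merged into one kernel-verified Lean document; each statement's English description precedes it below -/
import Mathlib

section
/- Let P be a finite partially ordered set with n ≥ 1 elements and let w : P → ℝ be an injective weight function. Let σ : {1,…,n} → P be a uniformly random bijection (so σ(1),…,σ(n) is the order in which the elements arrive), and for each k let A_k be the event that σ(k) is the greedy maximum, with respect to w, of the induced partial order on {σ(1),…,σ(k)}. Then Pr(A_k) = 1/k for every k ∈ {1,…,n}, and the events A₁,…,A_n are mutually independent. -/
open MeasureTheory Finset Function
open scoped Classical ENNReal

/-- The element of the finset `s` with minimum weight. -/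
noncomputable def argminOn {α : Type*} (w : α → ℝ) (s : Finset α) (h : s.Nonempty) : α :=
  (s.exists_min_image w h).choose

/-- One step of the greedy chain: if `x` is not maximal, move to the element of
minimum weight among those strictly above `x`; otherwise stay at `x`. -/
noncomputable def greedyStep {α : Type*} [PartialOrder α] [Fintype α] (w : α → ℝ) (x : α) : α :=
  if h : (Finset.univ.filter fun y => x < y).Nonempty then argminOn w _ h else x

/-- The greedy maximum of a finite nonempty partially ordered set with weights `w`:
start at the element of minimum weight and iterate `greedyStep` until stabilization
(`Fintype.card α` iterations suffice). -/
noncomputable def greedyMax {α : Type*} [PartialOrder α] [Fintype α] [Nonempty α]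
    (w : α → ℝ) : α :=
  (greedyStep w)^[Fintype.card α] (argminOn w Finset.univ Finset.univ_nonempty)

/-- `x` belongs to `s` and is the greedy maximum of the partial order induced on `s`,
with the weights `w` restricted to `s`. -/
def IsGreedyMaxOn {α : Type*} [PartialOrder α] [Fintype α]
    (w : α → ℝ) (s : Set α) (x : α) : Prop :=
  ∃ hx : x ∈ s,
    haveI : Nonempty s := ⟨⟨x, hx⟩⟩
    greedyMax (fun y : s => w y.1) = ⟨x, hx⟩

/-- `x` is *tagged*: it is the greedy maximum (w.r.t. the weights `w`) of the induced
partial order on the set of elements arriving no later than `x`. -/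
def Tagged {α : Type*} [PartialOrder α] [Fintype α] (T w : α → ℝ) (x : α) : Prop :=
  IsGreedyMaxOn w {y | T y ≤ T x} x

/-- The strategy accepts `x`: `x` is tagged, arrives after time `1/e`, and no other
element is tagged with arrival time in `(1/e, T x)`. -/
def Accepts {α : Type*} [PartialOrder α] [Fintype α] (T w : α → ℝ) (x : α) : Prop :=
  Tagged T w x ∧ 1 / Real.exp 1 < T x ∧
    ∀ y, Tagged T w y → 1 / Real.exp 1 < T y → T x ≤ T y

/-- The probability that `x` is the greedy maximum of `P` when the weights are
independent and uniform on `[0,1]`. -/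
noncomputable def muGreedy (P : Type) [Fintype P] [PartialOrder P] (x : P) : ℝ≥0∞ :=
  (Measure.pi fun _ : P => volume.restrict (Set.Icc (0:ℝ) 1)) {w | IsGreedyMaxOn w Set.univ x}

/-- The conditional probability that `x` is the greedy maximum of `P`, given `W x ≤ t`,
when the weights are independent and uniform on `[0,1]`. -/
noncomputable def muGreedyCond (P : Type) [Fintype P] [PartialOrder P] (t : ℝ) (x : P) : ℝ≥0∞ :=
  (Measure.pi fun _ : P => volume.restrict (Set.Icc (0:ℝ) 1))
      {w | IsGreedyMaxOn w Set.univ x ∧ w x ≤ t} /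
    (Measure.pi fun _ : P => volume.restrict (Set.Icc (0:ℝ) 1)) {w | w x ≤ t}

/-! The greedy maximum of a set depends only on the set, not on the order in which its elements
arrived. Hence transposing the arrival times of the greedy maximum of the first `k` arrivals and
of the `k`-th arrival is a bijection between orders in which the selected element arrives at
some time `j ≤ k` and orders in which it arrives at time `k`; this transposition preserves every
event at a later time. So `A k` has relative frequency `1/k` in any family of orders defined by
events at later times, and inducting on the smallest time of `S` makes the probabilities
multiply. -/

lemma Equiv.image_swap_of_mem_of_mem {ι : Type*} [DecidableEq ι] {s : Set ι} {i j : ι}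
    (hi : i ∈ s) (hj : j ∈ s) : Equiv.swap i j '' s = s := by
  have hmaps : Set.MapsTo (Equiv.swap i j) s s := fun x hx => by
    rw [Equiv.swap_apply_def]
    split_ifs <;> assumption
  exact hmaps.image_subset.antisymm fun x hx =>
    ⟨Equiv.swap i j x, hmaps hx, Equiv.swap_apply_self i j x⟩

lemma Equiv.image_swap_trans {ι α : Type*} [DecidableEq ι] (σ : ι ≃ α) {s : Set ι} {i j : ι}
    (hi : i ∈ s) (hj : j ∈ s) : (Equiv.swap i j).trans σ '' s = σ '' s := by
  rw [Equiv.coe_trans, Set.image_comp, Equiv.image_swap_of_mem_of_mem hi hj]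

section Records

variable {ι α : Type*} [LinearOrder ι] [LocallyFiniteOrderBot ι]

/-- `σ k` is the `k`-th arrival, and `p s x` says that the selection rule `p` picks `x`
from `s`. -/
def IsRecord (p : Set α → α → Prop) (σ : ι ≃ α) (k : ι) : Prop :=
  p (σ '' Set.Iic k) (σ k)

variable {p : Set α → α → Prop}

lemma card_Iic_mul_card_filter_isRecord (hp : ∀ s : Set α, s.Nonempty → ∃! x, x ∈ s ∧ p s x)
    (m : ι) (F : Finset (ι ≃ α)) (hF : ∀ j ≤ m, ∀ σ ∈ F, (Equiv.swap j m).trans σ ∈ F) :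
    #(Iic m) * #(F.filter (IsRecord p · m)) = #F := by
  set arrivesAt : ι → Finset (ι ≃ α) := fun j => F.filter fun σ => p (σ '' Set.Iic m) (σ j)
  have hcover : (Iic m).biUnion arrivesAt = F := by
    refine (biUnion_subset.2 fun j _ => filter_subset _ _).antisymm fun σ hσ => ?_
    obtain ⟨_, ⟨⟨j, hj, rfl⟩, hsel⟩, -⟩ := hp (σ '' Set.Iic m) ⟨σ m, m, le_rfl, rfl⟩
    exact mem_biUnion.2 ⟨j, mem_Iic.2 hj, mem_filter.2 ⟨hσ, hsel⟩⟩
  have hdisj : (Iic m : Set ι).PairwiseDisjoint arrivesAt := by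
    intro i hi j hj hij
    rw [coe_Iic] at hi hj
    refine disjoint_filter.2 fun σ _ hσi hσj => hij (σ.injective ?_)
    obtain ⟨_, -, huniq⟩ := hp (σ '' Set.Iic m) ⟨σ m, m, le_rfl, rfl⟩
    exact (huniq _ ⟨⟨i, hi, rfl⟩, hσi⟩).trans (huniq _ ⟨⟨j, hj, rfl⟩, hσj⟩).symm
  have hfiber : ∀ j ∈ Iic m, #(arrivesAt j) = #(arrivesAt m) := by
    intro j hj
    have hjm : j ≤ m := mem_Iic.1 hj
    have hinv (σ : ι ≃ α) : (Equiv.swap j m).trans ((Equiv.swap j m).trans σ) = σ := by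
      ext
      simp
    refine card_nbij' (fun σ => (Equiv.swap j m).trans σ) (fun σ => (Equiv.swap j m).trans σ)
      ?_ ?_ (fun σ _ => hinv σ) (fun σ _ => hinv σ)
    all_goals
      intro σ hσ
      simp only [arrivesAt, mem_coe, mem_filter] at hσ ⊢
      refine ⟨hF j hjm σ hσ.1, ?_⟩
      rw [σ.image_swap_trans (Set.mem_Iic.2 hjm) Set.self_mem_Iic]
      simpa using hσ.2
  calc #(Iic m) * #(F.filter (IsRecord p · m))
      = #(Iic m) * #(arrivesAt m) := rfl
    _ = ∑ j ∈ Iic m, #(arrivesAt j) := by rw [sum_congr rfl hfiber, sum_const, smul_eq_mul]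
    _ = #F := by rw [← card_biUnion hdisj, hcover]

variable [Fintype ι] [Fintype α]

lemma card_filter_forall_isRecord_mul_prod
    (hp : ∀ s : Set α, s.Nonempty → ∃! x, x ∈ s ∧ p s x) (S : Finset ι) :
    #(univ.filter fun σ : ι ≃ α => ∀ k ∈ S, IsRecord p σ k) * ∏ k ∈ S, #(Iic k) =
      Fintype.card (ι ≃ α) := by
  induction S using Finset.induction_on_min with
  | empty => simp
  | insert a S haS ih =>
    set F := univ.filter fun σ : ι ≃ α => ∀ k ∈ S, IsRecord p σ k
    have hF : ∀ j ≤ a, ∀ σ ∈ F, (Equiv.swap j a).trans σ ∈ F := by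
      intro j hja σ hσ
      simp only [F, mem_filter, mem_univ, true_and] at hσ ⊢
      intro k hk
      have hak := haS k hk
      rw [IsRecord, σ.image_swap_trans (Set.mem_Iic.2 (hja.trans hak.le)) (Set.mem_Iic.2 hak.le),
        Equiv.trans_apply, Equiv.swap_apply_of_ne_of_ne (hja.trans_lt hak).ne' hak.ne']
      exact hσ k hk
    have hinsert : (univ.filter fun σ : ι ≃ α => ∀ k ∈ insert a S, IsRecord p σ k) =
        F.filter (IsRecord p · a) := by
      ext σ
      simp [F, and_comm]
    rw [hinsert, prod_insert fun h => (haS a h).false, mul_left_comm, ← mul_assoc,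
      card_Iic_mul_card_filter_isRecord hp a F hF, ih]

lemma uniform_biInter_isRecord [Nonempty (ι ≃ α)]
    (hp : ∀ s : Set α, s.Nonempty → ∃! x, x ∈ s ∧ p s x) (S : Finset ι) :
    ((Fintype.card (ι ≃ α) : ℝ≥0∞)⁻¹ • @Measure.count (ι ≃ α) ⊤)
        (⋂ k ∈ S, {σ | IsRecord p σ k}) = ∏ k ∈ S, (#(Iic k) : ℝ≥0∞)⁻¹ := by
  let : MeasurableSpace (ι ≃ α) := ⊤
  set F := univ.filter fun σ : ι ≃ α => ∀ k ∈ S, IsRecord p σ k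
  have hF : ⋂ k ∈ S, {σ | IsRecord p σ k} = (F : Set (ι ≃ α)) := by
    ext σ
    simp [F]
  have hcount := card_filter_forall_isRecord_mul_prod hp S
  have hF0 : (#F : ℝ≥0∞) ≠ 0 := by
    refine Nat.cast_ne_zero.2 fun h => Fintype.card_ne_zero (α := ι ≃ α) ?_
    rw [← hcount, h, zero_mul]
  calc ((Fintype.card (ι ≃ α) : ℝ≥0∞)⁻¹ • @Measure.count (ι ≃ α) ⊤)
        (⋂ k ∈ S, {σ | IsRecord p σ k})
      = (Fintype.card (ι ≃ α) : ℝ≥0∞)⁻¹ * #F := by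
        rw [Measure.smul_apply, hF, Measure.count_apply_finset' MeasurableSpace.measurableSet_top,
          smul_eq_mul]
    _ = ((∏ k ∈ S, #(Iic k) : ℕ) : ℝ≥0∞)⁻¹ := by
        rw [← hcount, Nat.cast_mul,
          ENNReal.mul_inv (Or.inl hF0) (Or.inl (ENNReal.natCast_ne_top _)), mul_right_comm,
          ENNReal.inv_mul_cancel hF0 (ENNReal.natCast_ne_top _), one_mul]
    _ = ∏ k ∈ S, (#(Iic k) : ℝ≥0∞)⁻¹ := by
        rw [Nat.cast_prod,
          ENNReal.prod_inv_distrib fun _ _ _ _ _ => Or.inr (ENNReal.natCast_ne_top _)]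

end Records

lemma existsUnique_isGreedyMaxOn {α : Type*} [PartialOrder α] [Fintype α] (w : α → ℝ)
    {s : Set α} (hs : s.Nonempty) : ∃! x, x ∈ s ∧ IsGreedyMaxOn w s x := by
  have : Nonempty s := hs.to_subtype
  let g := greedyMax fun y : s => w y
  exact ⟨g, ⟨g.2, g.2, rfl⟩, fun _ ⟨_, _, hg⟩ => congrArg Subtype.val hg.symm⟩

theorem greedy_tag_events_independent_general (P : Type) [Fintype P] [PartialOrder P]
    {n : ℕ} (hcard : Fintype.card P = n)
    (w : P → ℝ) :
    let μ : @Measure (Fin n ≃ P) ⊤ :=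
      (Fintype.card (Fin n ≃ P) : ℝ≥0∞)⁻¹ • @Measure.count (Fin n ≃ P) ⊤
    let A : Fin n → Set (Fin n ≃ P) := fun k =>
      {σ | IsGreedyMaxOn w {y | ∃ j : Fin n, j ≤ k ∧ σ j = y} (σ k)}
    (∀ k : Fin n, μ (A k) = 1 / ((k : ℕ) + 1)) ∧
      ∀ S : Finset (Fin n), μ (⋂ k ∈ S, A k) = ∏ k ∈ S, μ (A k) := by
  intro μ A
  have : Nonempty (Fin n ≃ P) := ⟨(Fintype.equivFinOfCardEq hcard).symm⟩
  have hprob (S : Finset (Fin n)) :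
      μ (⋂ k ∈ S, A k) = ∏ k ∈ S, (((k : ℕ) + 1 : ℕ) : ℝ≥0∞)⁻¹ := by
    have h := uniform_biInter_isRecord (fun _ => existsUnique_isGreedyMaxOn w) S
    simp only [Fin.card_Iic] at h
    exact h
  refine ⟨fun k => by simpa using hprob {k}, fun S => ?_⟩
  rw [hprob]
  exact prod_congr rfl fun k _ => by simpa using (hprob {k}).symm

/-- If the elements of an `n`-element poset arrive in uniformly random
order, and `A k` is the event that the `k`-th arrival is the greedy maximum of the induced
partial order on the first `k` arrivals, then `Pr(A k) = 1/k` and the events `A 1, …, A n`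
are mutually independent. -/
theorem greedy_tag_events_independent (P : Type) [Fintype P] [PartialOrder P]
    {n : ℕ} (hn : 1 ≤ n) (hcard : Fintype.card P = n)
    (w : P → ℝ) (hw : Function.Injective w) :
    let μ : @Measure (Fin n ≃ P) ⊤ :=
      (Fintype.card (Fin n ≃ P) : ℝ≥0∞)⁻¹ • @Measure.count (Fin n ≃ P) ⊤
    let A : Fin n → Set (Fin n ≃ P) := fun k =>
      {σ | IsGreedyMaxOn w {y | ∃ j : Fin n, j ≤ k ∧ σ j = y} (σ k)}
    (∀ k : Fin n, μ (A k) = 1 / ((k : ℕ) + 1)) ∧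
      ∀ S : Finset (Fin n), μ (⋂ k ∈ S, A k) = ∏ k ∈ S, μ (A k) :=
  greedy_tag_events_independent_general P hcard w
end

section
/- Let P be a finite partially ordered set with n ≥ 1 elements and let w : P → ℝ be an injective weight function. Let σ : {1,…,n} → P be a uniformly random bijection, and for each k let A_k be the event that σ(k) is the greedy maximum, with respect to w, of the induced partial order on {σ(1),…,σ(k)}. (The event A₁ always holds.) Then the random variable J = max{k ∈ {1,…,n} : A_k occurs} is uniformly distributed on {1,…,n}. -/
open MeasureTheory Finset Function
open scoped Classical ENNReal

lemma isGreedyMaxOn_unique {α : Type*} [PartialOrder α] [Fintype α] {w : α → ℝ} {s : Set α}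
    {x y : α} (hx : IsGreedyMaxOn w s x) (hy : IsGreedyMaxOn w s y) : x = y := by
  obtain ⟨hx1, ex⟩ := hx
  obtain ⟨hy1, ey⟩ := hy
  exact congrArg Subtype.val (ex.symm.trans ey)

lemma exists_isGreedyMaxOn {α : Type*} [PartialOrder α] [Fintype α] (w : α → ℝ) {s : Set α}
    (hs : s.Nonempty) : ∃ x, IsGreedyMaxOn w s x := by
  haveI : Nonempty s := hs.to_subtype
  exact ⟨(greedyMax (fun y : s => w y.1)).1, (greedyMax (fun y : s => w y.1)).2, rfl⟩

section Aux
variable {P : Type} [Fintype P] [PartialOrder P] {n : ℕ}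

/-- The set of arrivals up to time `k`. -/
def gS (σ : Fin n ≃ P) (k : Fin n) : Set P := {y | ∃ j : Fin n, j ≤ k ∧ σ j = y}

/-- The event that the arrival at time `k` is the greedy max of the arrivals so far. -/
def gA (w : P → ℝ) (σ : Fin n ≃ P) (k : Fin n) : Prop := IsGreedyMaxOn w (gS σ k) (σ k)

def gC (w : P → ℝ) (k : Fin n) : Set (Fin n ≃ P) := {σ | ∀ j : Fin n, k < j → ¬ gA w σ j}

def gN (w : P → ℝ) (k : Fin n) : Set (Fin n ≃ P) :=
  {σ | gA w σ k ∧ ∀ j : Fin n, k < j → ¬ gA w σ j}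

lemma gS_swap (σ : Fin n ≃ P) {p q j : Fin n} (hpq : p ≤ q) (hqj : q ≤ j) :
    gS ((Equiv.swap p q).trans σ) j = gS σ j := by
  have hswap : ∀ i : Fin n, i ≤ j → Equiv.swap p q i ≤ j := by
    intro i hi
    rcases eq_or_ne i p with rfl | hip
    · rw [Equiv.swap_apply_left]; exact hqj
    rcases eq_or_ne i q with rfl | hiq
    · rw [Equiv.swap_apply_right]; exact hpq.trans hqj
    · rw [Equiv.swap_apply_of_ne_of_ne hip hiq]; exact hi
  ext y
  simp only [gS, Set.mem_setOf_eq, Equiv.trans_apply]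
  constructor
  · rintro ⟨i, hi, rfl⟩
    exact ⟨Equiv.swap p q i, hswap i hi, rfl⟩
  · rintro ⟨i, hi, rfl⟩
    exact ⟨Equiv.swap p q i, hswap i hi, by rw [Equiv.swap_apply_self]⟩

lemma gval_swap (σ : Fin n ≃ P) {p q j : Fin n} (hpq : p ≤ q) (hqj : q < j) :
    ((Equiv.swap p q).trans σ) j = σ j := by
  have h1 : j ≠ p := (lt_of_le_of_lt hpq hqj).ne'
  have h2 : j ≠ q := hqj.ne'
  simp [Equiv.trans_apply, Equiv.swap_apply_of_ne_of_ne h1 h2]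

lemma gA_swap (w : P → ℝ) (σ : Fin n ≃ P) {p q j : Fin n} (hpq : p ≤ q) (hqj : q < j) :
    gA w ((Equiv.swap p q).trans σ) j ↔ gA w σ j := by
  unfold gA
  rw [gS_swap σ hpq hqj.le, gval_swap σ hpq hqj]

lemma swap_trans_swap_trans (σ : Fin n ≃ P) (p q : Fin n) :
    (Equiv.swap p q).trans ((Equiv.swap p q).trans σ) = σ := by
  ext i
  simp [Equiv.trans_apply, Equiv.swap_apply_self]

lemma gC_card (w : P → ℝ) (k : Fin n) : (gC w k).ncard = (gN w k).ncard * (k.val + 1) := by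
  classical
  have hex : ∀ σ : Fin n ≃ P, ∃ x, IsGreedyMaxOn w (gS σ k) x := fun σ =>
    exists_isGreedyMaxOn w ⟨σ k, k, le_refl k, rfl⟩
  set g : (Fin n ≃ P) → P := fun σ => (hex σ).choose with hgdef
  have hg : ∀ σ, IsGreedyMaxOn w (gS σ k) (g σ) := fun σ => (hex σ).choose_spec
  have hgp : ∀ σ : Fin n ≃ P, σ.symm (g σ) ≤ k := by
    intro σ
    obtain ⟨⟨i, hi, hiy⟩, -⟩ := hg σ
    rw [← hiy, Equiv.symm_apply_apply]
    exact hi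
  have hF_mem : ∀ σ : Fin n ≃ P, σ ∈ gC w k →
      (Equiv.swap (σ.symm (g σ)) k).trans σ ∈ gN w k := by
    intro σ hσ
    constructor
    · show IsGreedyMaxOn w _ _
      rw [show gS ((Equiv.swap (σ.symm (g σ)) k).trans σ) k = gS σ k from
        gS_swap σ (hgp σ) le_rfl]
      have : ((Equiv.swap (σ.symm (g σ)) k).trans σ) k = g σ := by
        simp [Equiv.trans_apply, Equiv.swap_apply_right, Equiv.apply_symm_apply]
      rw [this]
      exact hg σ
    · intro j hj
      rw [gA_swap w σ (hgp σ) hj]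
      exact hσ j hj
  have hG_mem : ∀ (τ : Fin n ≃ P) (p : Fin n), τ ∈ gN w k → p ≤ k →
      (Equiv.swap p k).trans τ ∈ gC w k := by
    intro τ p hτ hp j hj
    rw [gA_swap w τ hp hj]
    exact hτ.2 j hj
  have e : ↥(gC w k) ≃ ↥(gN w k) × {p : Fin n // p ≤ k} :=
    { toFun := fun σ => (⟨(Equiv.swap (σ.1.symm (g σ.1)) k).trans σ.1, hF_mem σ.1 σ.2⟩,
        ⟨σ.1.symm (g σ.1), hgp σ.1⟩)
      invFun := fun τp => ⟨(Equiv.swap τp.2.1 k).trans τp.1.1, hG_mem τp.1.1 τp.2.1 τp.1.2 τp.2.2⟩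
      left_inv := by
        rintro ⟨σ, hσ⟩
        exact Subtype.ext (swap_trans_swap_trans σ _ k)
      right_inv := by
        rintro ⟨⟨τ, hτ⟩, ⟨p, hp⟩⟩
        set σ : Fin n ≃ P := (Equiv.swap p k).trans τ with hσdef
        have hgστ : g σ = τ k := by
          refine isGreedyMaxOn_unique ?_ hτ.1
          have := hg σ
          rwa [show gS σ k = gS τ k from gS_swap τ hp le_rfl] at this
        have hσp : σ p = g σ := by
          rw [hgστ]
          simp [hσdef, Equiv.trans_apply, Equiv.swap_apply_left]
        have hpp : σ.symm (g σ) = p := by rw [← hσp, Equiv.symm_apply_apply]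
        refine Prod.ext (Subtype.ext ?_) (Subtype.ext ?_)
        · show (Equiv.swap (σ.symm (g σ)) k).trans σ = τ
          rw [hpp, hσdef, swap_trans_swap_trans]
        · exact hpp }
  have hcard_sub : Nat.card {p : Fin n // p ≤ k} = k.val + 1 := by
    have e2 : {p : Fin n // p ≤ k} ≃ Fin (k.val + 1) :=
      { toFun := fun p => ⟨p.1.1, Nat.lt_succ_of_le (Fin.le_def.mp p.2)⟩
        invFun := fun q => ⟨⟨q.1, lt_of_le_of_lt (Nat.le_of_lt_succ q.2) k.2⟩,
          Fin.le_def.mpr (Nat.le_of_lt_succ q.2)⟩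
        left_inv := fun p => rfl
        right_inv := fun q => rfl }
    rw [Nat.card_congr e2]; simp
  calc (gC w k).ncard = Nat.card ↥(gC w k) := (Nat.card_coe_set_eq _).symm
    _ = Nat.card (↥(gN w k) × {p : Fin n // p ≤ k}) := Nat.card_congr e
    _ = Nat.card ↥(gN w k) * Nat.card {p : Fin n // p ≤ k} := Nat.card_prod _ _
    _ = (gN w k).ncard * (k.val + 1) := by rw [Nat.card_coe_set_eq, hcard_sub]

lemma gC_split (w : P → ℝ) {a b : Fin n} (hab : a.val + 1 = b.val) :
    gC w a = gC w b \ gN w b := by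
  have hab' : a < b := by rw [Fin.lt_def]; omega
  ext σ
  simp only [gC, gN, Set.mem_setOf_eq, Set.mem_diff, not_and]
  constructor
  · intro h
    exact ⟨fun j hj => h j (hab'.trans hj), fun hA => absurd hA (h b hab')⟩
  · rintro ⟨hC, hN⟩ j hj
    rcases eq_or_lt_of_le (show b ≤ j by rw [Fin.le_def]; rw [Fin.lt_def] at hj; omega)
      with rfl | hbj
    · intro hA; exact hN hA hC
    · exact hC j hbj

end Aux

section Aux2
variable {P : Type} [Fintype P] [PartialOrder P] {n : ℕ}

lemma gC_fac (w : P → ℝ) (hcard : Fintype.card P = n) :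
    ∀ m : ℕ, ∀ k : Fin n, k.val + m + 1 = n →
      (gC w k).ncard * n = (k.val + 1) * n.factorial := by
  have hall : Nat.card (Fin n ≃ P) = n.factorial := by
    rw [Nat.card_eq_fintype_card, Fintype.card_equiv (Fintype.equivFinOfCardEq hcard).symm]
    simp
  intro m
  induction m with
  | zero =>
    intro k hk
    have hCuniv : gC w k = Set.univ := by
      ext σ
      simp only [gC, Set.mem_setOf_eq, Set.mem_univ, iff_true]
      intro j hj
      exfalso
      rw [Fin.lt_def] at hj
      have := j.2
      omega
    rw [hCuniv, Set.ncard_univ, hall]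
    have : k.val + 1 = n := by omega
    rw [this]
    ring
  | succ m ih =>
    intro k hk
    have hklt : k.val + 1 < n := by omega
    set k' : Fin n := ⟨k.val + 1, hklt⟩ with hk'def
    have hk'v : k'.val = k.val + 1 := rfl
    have ih' := ih k' (by rw [hk'v]; omega)
    rw [hk'v] at ih'
    -- (gN w k').ncard * n = n.factorial
    have hcc := gC_card w k'
    rw [hk'v] at hcc
    have hNn' : (gN w k').ncard * n = n.factorial := by
      have h1 : (k.val + 2) * ((gN w k').ncard * n) = (k.val + 2) * n.factorial := by
        rw [← ih', hcc]; ring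
      exact Nat.eq_of_mul_eq_mul_left (by omega) h1
    have hsub : gN w k' ⊆ gC w k' := fun σ hσ => hσ.2
    have hdiff := Set.ncard_diff_add_ncard_of_subset hsub (Set.toFinite _)
    rw [← gC_split w hk'v.symm] at hdiff
    -- hdiff : (gC w k).ncard + (gN w k').ncard = (gC w k').ncard
    have h2 : (gC w k).ncard * n + (gN w k').ncard * n = (gC w k').ncard * n := by
      rw [← hdiff]; ring
    rw [hNn', ih'] at h2
    have h3 : (k.val + 1 + 1) * n.factorial = (k.val + 1) * n.factorial + n.factorial := by ring
    rw [h3] at h2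
    exact Nat.add_right_cancel h2

lemma gN_mul (w : P → ℝ) (hn : 1 ≤ n) (hcard : Fintype.card P = n) (k : Fin n) :
    (gN w k).ncard * n = n.factorial := by
  have h1 := gC_fac w hcard (n - 1 - k.val) k (by have := k.2; omega)
  rw [gC_card w k] at h1
  have h2 : (k.val + 1) * ((gN w k).ncard * n) = (k.val + 1) * n.factorial := by
    rw [← h1]; ring
  exact Nat.eq_of_mul_eq_mul_left (Nat.succ_pos _) h2

end Aux2

/-- With the elements arriving in uniformly random order, the index of the
last arrival that is the greedy maximum of the induced partial order on the arrivals so far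
is uniformly distributed on `{1, …, n}`: for each `k`, the probability that `A k` occurs and
no `A j` with `j > k` occurs equals `1/n`. -/
theorem last_greedy_tag_uniform (P : Type) [Fintype P] [PartialOrder P]
    {n : ℕ} (hn : 1 ≤ n) (hcard : Fintype.card P = n)
    (w : P → ℝ) (hw : Function.Injective w) :
    let μ : @Measure (Fin n ≃ P) ⊤ :=
      (Fintype.card (Fin n ≃ P) : ℝ≥0∞)⁻¹ • @Measure.count (Fin n ≃ P) ⊤
    let A : Fin n → Set (Fin n ≃ P) := fun k =>
      {σ | IsGreedyMaxOn w {y | ∃ j : Fin n, j ≤ k ∧ σ j = y} (σ k)}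
    ∀ k : Fin n, μ {σ | σ ∈ A k ∧ ∀ j : Fin n, k < j → σ ∉ A j} = 1 / n := by
  intro μ A k
  have hset : {σ : Fin n ≃ P | σ ∈ A k ∧ ∀ j : Fin n, k < j → σ ∉ A j} = gN w k := rfl
  rw [hset]
  letI : MeasurableSpace (Fin n ≃ P) := ⊤
  haveI : MeasurableSingletonClass (Fin n ≃ P) := ⟨fun _ => MeasurableSpace.measurableSet_top⟩
  have hcnt : @Measure.count (Fin n ≃ P) ⊤ (gN w k) = ((gN w k).ncard : ℝ≥0∞) := by
    rw [Measure.count_apply_finite _ (Set.toFinite _),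
      ← Set.ncard_eq_toFinset_card (gN w k) (Set.toFinite _)]
  have hμeq : μ (gN w k) =
      (Fintype.card (Fin n ≃ P) : ℝ≥0∞)⁻¹ * @Measure.count (Fin n ≃ P) ⊤ (gN w k) := rfl
  have hfc : (Fintype.card (Fin n ≃ P) : ℝ≥0∞) = (n.factorial : ℝ≥0∞) := by
    rw [Fintype.card_equiv (Fintype.equivFinOfCardEq hcard).symm]
    simp
  have hNn := gN_mul w hn hcard k
  have hNN0 : ((gN w k).ncard : ℝ≥0∞) ≠ 0 := by
    have : (gN w k).ncard ≠ 0 := by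
      intro h
      rw [h, zero_mul] at hNn
      exact (Nat.factorial_pos n).ne' hNn.symm
    exact_mod_cast this
  have hcast : ((gN w k).ncard : ℝ≥0∞) * (n : ℝ≥0∞) = (n.factorial : ℝ≥0∞) := by
    exact_mod_cast congrArg (Nat.cast : ℕ → ℝ≥0∞) hNn
  rw [hμeq, hcnt, hfc, one_div, ← hcast,
    ENNReal.mul_inv (Or.inl hNN0) (Or.inl (ENNReal.natCast_ne_top _)),
    mul_comm (((gN w k).ncard : ℝ≥0∞))⁻¹ _, mul_assoc,
    ENNReal.inv_mul_cancel hNN0 (ENNReal.natCast_ne_top _), mul_one]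
end

section
/- Let P be a finite nonempty partially ordered set, let x be a maximal element of P, and fix 0 < t ≤ 1. Independently of each other, let B_y for y ∈ P \ {x} be independent Bernoulli random variables with Pr(B_y = 1) = t, and let the weights W : P → [0,1] have independent coordinates uniform on [0,1]. Let Q be the induced partial order on {x} ∪ {y ∈ P \ {x} : B_y = 1}. Then the probability that x is the greedy maximum of Q with respect to the restriction of W equals μ_t(x). -/
open MeasureTheory Finset Function
open scoped Classical ENNReal

/-!
Condition on `W x ≤ t`. The greedy chain only climbs through elements lighter than its end, so
for a maximal `x` and injective weights, `x` is the greedy maximum of `P` iff it is the greedy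
maximum of any subposet containing `x` and every element lighter than `x`, e.g. of the sublevel
set `{y | W y ≤ t}`. Given `W x ≤ t`, every `y ≠ x` lies in this sublevel set independently with
probability `t`, and on it the weights are `t` times independent uniform weights; multiplying by
`t` does not change the greedy chain. Hence the sublevel set with its weights has the law of the
thinned poset with the weights `W`. Both sides are computed by splitting according to the pattern
of kept elements; each piece is an affine change of variables on the unit cube.
-/

section GreedyChain

variable {α : Type*}

lemma argminOn_mem (w : α → ℝ) (s : Finset α) (h : s.Nonempty) : argminOn w s h ∈ s :=
  (s.exists_min_image w h).choose_spec.1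

lemma argminOn_le (w : α → ℝ) {s : Finset α} (h : s.Nonempty) {b : α} (hb : b ∈ s) :
    w (argminOn w s h) ≤ w b :=
  (s.exists_min_image w h).choose_spec.2 b hb

lemma argminOn_congr {w w' : α → ℝ} (hw' : Injective w')
    (hord : ∀ a b, w a ≤ w b ↔ w' a ≤ w' b) (s : Finset α) (h : s.Nonempty) :
    argminOn w s h = argminOn w' s h :=
  hw' <| le_antisymm ((hord _ _).1 (argminOn_le w h (argminOn_mem w' s h)))
    (argminOn_le w' h (argminOn_mem w s h))

lemma val_argminOn_subtype {w : α → ℝ} (hw : Injective w) {p : α → Prop}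
    {s : Finset α} {s' : Finset (Subtype p)} (hs' : ∀ y : Subtype p, y ∈ s' ↔ y.1 ∈ s)
    (h : s.Nonempty) (h' : s'.Nonempty) (hp : p (argminOn w s h)) :
    (argminOn (fun y : Subtype p => w y) s' h').1 = argminOn w s h :=
  hw <| le_antisymm
    (argminOn_le (fun y : Subtype p => w y) h' ((hs' ⟨_, hp⟩).2 (argminOn_mem w s h)))
    (argminOn_le w h ((hs' _).1 (argminOn_mem _ s' h')))

variable [PartialOrder α] [Fintype α]

lemma greedyStep_congr {w w' : α → ℝ} (hw' : Injective w')
    (hord : ∀ a b, w a ≤ w b ↔ w' a ≤ w' b) : greedyStep w = greedyStep w' := by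
  funext z
  unfold greedyStep
  split_ifs with h
  · exact argminOn_congr hw' hord _ h
  · rfl

lemma greedyMax_congr [Nonempty α] {w w' : α → ℝ} (hw' : Injective w')
    (hord : ∀ a b, w a ≤ w b ↔ w' a ≤ w' b) : greedyMax w = greedyMax w' := by
  rw [greedyMax, greedyMax, greedyStep_congr hw' hord, argminOn_congr hw' hord]

lemma isGreedyMaxOn_congr {w w' : α → ℝ} {s : Set α} (hw' : Set.InjOn w' s)
    (hord : ∀ a ∈ s, ∀ b ∈ s, w a ≤ w b ↔ w' a ≤ w' b) (x : α) :
    IsGreedyMaxOn w s x ↔ IsGreedyMaxOn w' s x := by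
  refine exists_congr fun hx => ?_
  have : Nonempty s := ⟨⟨x, hx⟩⟩
  rw [greedyMax_congr (fun a b hab => Subtype.ext (hw' a.2 b.2 hab))
    (fun a b => hord a a.2 b b.2)]

lemma le_greedyStep (w : α → ℝ) (z : α) : z ≤ greedyStep w z := by
  unfold greedyStep
  split_ifs with h
  · exact (Finset.mem_filter.1 (argminOn_mem w _ h)).2.le
  · exact le_rfl

lemma greedyStep_eq_self (w : α → ℝ) {z : α} (hz : IsMax z) : greedyStep w z = z :=
  dif_neg fun ⟨_, hy⟩ => hz.not_lt (Finset.mem_filter.1 hy).2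

lemma le_iterate_greedyStep (w : α → ℝ) (z : α) (n : ℕ) : z ≤ (greedyStep w)^[n] z := by
  induction n with
  | zero => exact le_rfl
  | succ n ih => exact ih.trans (by rw [iterate_succ_apply']; exact le_greedyStep w _)

-- An inflationary map on a finite poset can move at most `card α` times before it stops.
lemma isFixedPt_iterate_card_greedyStep (w : α → ℝ) (z : α) :
    IsFixedPt (greedyStep w) ((greedyStep w)^[Fintype.card α] z) := by
  set f := greedyStep w
  by_contra hfix
  have hlt : ∀ i ≤ Fintype.card α, f^[i] z < f^[i + 1] z := fun i hi => by
    refine lt_of_le_of_ne (by rw [iterate_succ_apply']; exact le_greedyStep w _) fun heq => ?_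
    have hi_fix : IsFixedPt f (f^[i] z) := by
      rw [IsFixedPt, ← iterate_succ_apply' f]; exact heq.symm
    apply hfix
    rw [← Nat.sub_add_cancel hi, iterate_add_apply, hi_fix.iterate]
    exact hi_fix
  have hmono : StrictMono fun i : Fin (Fintype.card α + 1) => f^[i] z :=
    Fin.strictMono_iff_lt_succ.2 fun i => hlt i i.is_lt.le
  simpa using Fintype.card_le_of_injective _ hmono.injective

lemma greedyMax_eq_iff_exists_iterate [Nonempty α] (w : α → ℝ) {x : α} (hx : IsMax x) :
    greedyMax w = x ↔
      ∃ n, (greedyStep w)^[n] (argminOn w Finset.univ Finset.univ_nonempty) = x := by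
  refine ⟨fun h => ⟨_, h⟩, fun ⟨n, hn⟩ => ?_⟩
  set f := greedyStep w
  set z := argminOn w Finset.univ Finset.univ_nonempty
  have hxfix : IsFixedPt f x := greedyStep_eq_self w hx
  rcases le_total n (Fintype.card α) with hle | hle
  · rw [greedyMax, ← Nat.sub_add_cancel hle, iterate_add_apply, hn, hxfix.iterate]
  · rw [← hn, ← Nat.sub_add_cancel hle, iterate_add_apply]
    exact ((isFixedPt_iterate_card_greedyStep w z).iterate _).symm

end GreedyChain

section GreedyRestriction

variable {α : Type*} [PartialOrder α] [Fintype α] {w : α → ℝ} {x : α} {s : Set α}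

-- Below `x`, the greedy step of `α` only looks at elements lighter than `x`, which all lie in `s`.
lemma val_greedyStep_subtype (hw : Injective w) (hxs : x ∈ s)
    (hs : ∀ y, w y ≤ w x → y ∈ s) (z : s) (hzx : z.1 < x) :
    (greedyStep (fun y : s => w y) z).1 = greedyStep w z := by
  have hne : (Finset.univ.filter fun y => z.1 < y).Nonempty := ⟨x, by simpa using hzx⟩
  have hne' : (Finset.univ.filter fun y : s => z < y).Nonempty :=
    ⟨⟨x, hxs⟩, Finset.mem_filter.2 ⟨Finset.mem_univ _, hzx⟩⟩
  rw [greedyStep, greedyStep, dif_pos hne, dif_pos hne']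
  exact val_argminOn_subtype hw (by simp) hne hne'
    (hs _ (argminOn_le w hne (by simpa using hzx)))

lemma iterate_greedyStep_subtype_eq_iff (hw : Injective w) (hx : IsMax x) (hxs : x ∈ s)
    (hs : ∀ y, w y ≤ w x → y ∈ s) (n : ℕ) (z : s) :
    (greedyStep (fun y : s => w y))^[n] z = ⟨x, hxs⟩ ↔ (greedyStep w)^[n] z = x := by
  induction n generalizing z with
  | zero => exact Subtype.ext_iff
  | succ n ih =>
    by_cases hzx : z.1 ≤ x
    · rcases hzx.lt_or_eq with hzx | rfl
      · rw [iterate_succ_apply, iterate_succ_apply, ih, val_greedyStep_subtype hw hxs hs z hzx]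
      · have hzmax : IsMax z := fun b hb => hx hb
        rw [iterate_succ_apply, iterate_succ_apply, greedyStep_eq_self _ hzmax,
          greedyStep_eq_self _ hx, ih]
    · refine iff_of_false (fun h => hzx ?_) (fun h => hzx ?_)
      · exact Subtype.coe_le_coe.2 ((le_iterate_greedyStep _ z (n + 1)).trans_eq h)
      · exact h ▸ le_iterate_greedyStep w z.1 (n + 1)

lemma isGreedyMaxOn_iff_greedyMax_eq [Nonempty α] (hw : Injective w) (hx : IsMax x)
    (hxs : x ∈ s) (hs : ∀ y, w y ≤ w x → y ∈ s) :
    IsGreedyMaxOn w s x ↔ greedyMax w = x := by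
  have : Nonempty s := ⟨⟨x, hxs⟩⟩
  have hxmax : IsMax (⟨x, hxs⟩ : s) := fun b hb => hx hb
  have hstart : (argminOn (fun y : s => w y) Finset.univ Finset.univ_nonempty).1 =
      argminOn w Finset.univ Finset.univ_nonempty :=
    val_argminOn_subtype hw (by simp) _ _ (hs _ (argminOn_le w _ (Finset.mem_univ x)))
  rw [IsGreedyMaxOn, exists_prop_of_true hxs, greedyMax_eq_iff_exists_iterate _ hxmax,
    greedyMax_eq_iff_exists_iterate _ hx]
  simp only [iterate_greedyStep_subtype_eq_iff hw hx hxs hs, hstart]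

lemma isGreedyMaxOn_iff_isGreedyMaxOn_univ (hw : Injective w) (hx : IsMax x)
    (hxs : x ∈ s) (hs : ∀ y, w y ≤ w x → y ∈ s) :
    IsGreedyMaxOn w s x ↔ IsGreedyMaxOn w Set.univ x := by
  have : Nonempty α := ⟨x⟩
  rw [isGreedyMaxOn_iff_greedyMax_eq hw hx hxs hs,
    isGreedyMaxOn_iff_greedyMax_eq hw hx (Set.mem_univ x) fun y _ => Set.mem_univ y]

end GreedyRestriction

lemma measure_eq_sum_inter {Ω ι : Type*} [MeasurableSpace Ω] [Fintype ι] (μ : Measure Ω)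
    {M : ι → Set Ω} (hM : ∀ i, MeasurableSet (M i)) (hd : Pairwise (Disjoint on M))
    (hcov : ⋃ i, M i = Set.univ) (s : Set Ω) :
    μ s = ∑ i, μ (s ∩ M i) := by
  conv_lhs => rw [← Measure.restrict_univ (μ := μ), ← hcov, Measure.restrict_iUnion hd hM]
  rw [Measure.sum_apply_of_countable, tsum_fintype]
  exact Finset.sum_congr rfl fun i _ => Measure.restrict_apply' (hM i)

lemma measure_prod_setOf_mem_eq_sum {Ω β : Type*} [MeasurableSpace Ω] [MeasurableSpace β]
    [Fintype β] [MeasurableSingletonClass β] (μ : Measure Ω) (π : Measure β) [SFinite π]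
    (F : β → Set Ω) :
    (μ.prod π) {ω | ω.1 ∈ F ω.2} = ∑ b, μ (F b) * π {b} := by
  rw [measure_eq_sum_inter _ (M := fun b => Set.univ ×ˢ {b})
    (fun b => MeasurableSet.univ.prod (measurableSet_singleton b))
    (fun b b' hbb' => Set.disjoint_prod.2 (Or.inr (Set.disjoint_singleton.2 hbb')))
    (Set.eq_univ_of_forall fun ω => Set.mem_iUnion.2 ⟨ω.2, by simp⟩)]
  refine Finset.sum_congr rfl fun b _ => ?_
  rw [← Measure.prod_prod]
  congr 1
  ext ⟨w, c⟩
  simp +contextual [and_comm]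

lemma pi_uniform_eq_restrict (ι : Type*) [Fintype ι] :
    Measure.pi (fun _ : ι => volume.restrict (Set.Icc (0:ℝ) 1)) =
      volume.restrict (Set.univ.pi fun _ : ι => Set.Icc (0:ℝ) 1) :=
  (Measure.restrict_pi_pi _ _).symm

lemma ae_injective_volume_pi (ι : Type*) [Fintype ι] :
    ∀ᵐ w : ι → ℝ ∂volume, Injective w := by
  have hne : ∀ a b : ι, ∀ᵐ w : ι → ℝ ∂volume, a ≠ b → w a ≠ w b := fun a b => by
    by_cases hab : a = b
    · exact Filter.Eventually.of_forall fun _ h => (h hab).elim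
    let f : (ι → ℝ) →ₗ[ℝ] ℝ :=
      LinearMap.proj (R := ℝ) (φ := fun _ => ℝ) a - LinearMap.proj b
    have hf : LinearMap.ker f ≠ ⊤ := fun htop => by
      simpa [f, Pi.single_apply, hab, Ne.symm hab] using
        LinearMap.congr_fun (LinearMap.ker_eq_top.1 htop) (Pi.single a 1)
    filter_upwards [measure_eq_zero_iff_ae_notMem.1 (Measure.addHaar_submodule volume _ hf)]
      with w hw _ hwab
    exact hw (by simp [f, hwab])
  filter_upwards [ae_all_iff.2 fun a => ae_all_iff.2 (hne a)] with w hw a b hwab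
  by_contra hab
  exact hw a b hab hwab

-- The affine change of variables `w ↦ d + c * w` maps the unit cube onto the box.
lemma volume_inter_pi_Icc {ι : Type*} [Fintype ι] {c : ι → ℝ} (hc : ∀ i, 0 < c i)
    (d : ι → ℝ) (G : Set (ι → ℝ)) :
    volume (G ∩ Set.univ.pi fun i => Set.Icc (d i) (d i + c i)) =
      (∏ i, ENNReal.ofReal (c i)) *
        volume ((fun w => d + c * w) ⁻¹' G ∩ Set.univ.pi fun _ => Set.Icc 0 1) := by
  classical
  set L : (ι → ℝ) →ₗ[ℝ] ι → ℝ := Matrix.toLin' (Matrix.diagonal c)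
  have hL : ∀ w, L w = c * w := fun w => funext fun i => Matrix.mulVec_diagonal _ _ _
  have hdet : LinearMap.det L = ∏ i, c i := by
    rw [LinearMap.det_toLin', Matrix.det_diagonal]
  have hcube : (fun w => d + c * w) ⁻¹' (Set.univ.pi fun i => Set.Icc (d i) (d i + c i)) =
      Set.univ.pi fun _ => Set.Icc 0 1 := by
    ext w
    simp only [Set.mem_preimage, Set.mem_univ_pi, Set.mem_Icc, Pi.add_apply, Pi.mul_apply]
    refine forall_congr' fun i => ?_
    constructor
    · rintro ⟨h0, h1⟩
      exact ⟨nonneg_of_mul_nonneg_right (by linarith) (hc i),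
        le_of_mul_le_mul_left (by linarith) (hc i)⟩
    · rintro ⟨h0, h1⟩
      constructor <;> nlinarith [hc i]
  have hprod : 0 < ∏ i, c i := Finset.prod_pos fun i _ => hc i
  rw [← hcube, ← Set.preimage_inter,
    show (fun w => d + c * w) = (fun v => d + v) ∘ L from funext fun w => by simp [hL],
    Set.preimage_comp, Measure.addHaar_preimage_linearMap _ (hdet ▸ hprod.ne'),
    measure_preimage_add, hdet, ← ENNReal.ofReal_prod_of_nonneg fun i _ => (hc i).le,
    ← mul_assoc, abs_of_pos (inv_pos.2 hprod), ← ENNReal.ofReal_mul hprod.le,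
    mul_inv_cancel₀ hprod.ne', ENNReal.ofReal_one, one_mul]

instance : IsProbabilityMeasure (volume.restrict (Set.Icc (0:ℝ) 1)) :=
  ⟨by simp [Real.volume_Icc]⟩

section Thinning

variable {P : Type*} {x : P} {t : ℝ}

lemma sublevel_inter_cube (S : Set P) (ht0 : 0 ≤ t) (ht1 : t ≤ 1) :
    {w : P → ℝ | {y | w y ≤ t} = S} ∩ (Set.univ.pi fun _ => Set.Icc 0 1) =
      Set.univ.pi fun y => if y ∈ S then Set.Icc 0 t else Set.Ioc t 1 := by
  ext w
  simp only [Set.mem_inter_iff, Set.mem_ofPred_eq, Set.ext_iff, Set.mem_univ_pi, ← forall_and]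
  refine forall_congr' fun y => ?_
  by_cases hy : y ∈ S <;> simp only [hy, if_true, if_false, Set.mem_Icc, Set.mem_Ioc] <;> grind

def thinnedSet (x : P) (b : {y // y ≠ x} → Bool) : Set P :=
  {y | y = x ∨ ∃ h : y ≠ x, b ⟨y, h⟩ = true}

lemma self_mem_thinnedSet (b : {y // y ≠ x} → Bool) : x ∈ thinnedSet x b := Or.inl rfl

lemma mem_thinnedSet_iff {b : {y // y ≠ x} → Bool} (y : {y // y ≠ x}) :
    y.1 ∈ thinnedSet x b ↔ b y = true := by
  simp [thinnedSet, y.2]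

lemma setOf_le_inter_setOf_forall_le_iff (b : {y // y ≠ x} → Bool) :
    {w : P → ℝ | w x ≤ t} ∩ {w | ∀ y : {y // y ≠ x}, w y ≤ t ↔ b y = true} =
      {w | {y | w y ≤ t} = thinnedSet x b} := by
  ext w
  simp only [Set.mem_inter_iff, Set.mem_ofPred_eq, Set.ext_iff]
  constructor
  · rintro ⟨hxt, hb⟩ y
    by_cases hy : y = x
    · subst hy
      exact iff_of_true hxt (self_mem_thinnedSet b)
    · exact (hb ⟨y, hy⟩).trans (mem_thinnedSet_iff ⟨y, hy⟩).symm
  · intro h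
    exact ⟨(h x).2 (self_mem_thinnedSet b), fun y => (h y).trans (mem_thinnedSet_iff y)⟩

variable [Fintype P]

local notation "μU" => Measure.pi fun _ : P => volume.restrict (Set.Icc (0:ℝ) 1)

lemma pi_uniform_apply (A : Set (P → ℝ)) :
    μU A = volume (A ∩ Set.univ.pi fun _ => Set.Icc 0 1) := by
  rw [pi_uniform_eq_restrict,
    Measure.restrict_apply' (MeasurableSet.univ_pi fun _ => measurableSet_Icc)]

lemma ae_injective_pi_uniform : ∀ᵐ w ∂μU, Injective w := by
  rw [pi_uniform_eq_restrict]
  exact ae_restrict_of_ae (ae_injective_volume_pi P)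

lemma pi_uniform_setOf_apply_le (ht1 : t ≤ 1) :
    μU {w | w x ≤ t} = ENNReal.ofReal t := by
  have hI : Set.Iic t ∩ Set.Icc 0 1 = Set.Icc 0 t := by
    ext; simp only [Set.mem_inter_iff, Set.mem_Iic, Set.mem_Icc]; grind
  change μU (Function.eval x ⁻¹' Set.Iic t) = _
  rw [(measurePreserving_eval _ x).measure_preimage measurableSet_Iic.nullMeasurableSet,
    Measure.restrict_apply measurableSet_Iic, hI, Real.volume_Icc, sub_zero]

lemma pi_uniform_inter_sublevel (S : Set P) (ht0 : 0 < t) (ht1 : t ≤ 1)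
    (G : Set (P → ℝ)) :
    μU (G ∩ {w | {y | w y ≤ t} = S}) =
      (∏ y, ENNReal.ofReal (if y ∈ S then t else 1 - t)) *
        μU ((fun w => (fun y => if y ∈ S then 0 else t) +
          (fun y => if y ∈ S then t else 1 - t) * w) ⁻¹' G) := by
  rw [pi_uniform_apply, pi_uniform_apply, Set.inter_assoc, sublevel_inter_cube S ht0.le ht1]
  by_cases hc : ∀ y, 0 < if y ∈ S then t else 1 - t
  · rw [← volume_inter_pi_Icc hc]
    refine measure_congr (Filter.EventuallyEq.inter .rfl (Measure.ae_eq_set_pi fun y _ => ?_))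
    by_cases hy : y ∈ S
    · simp only [hy, if_true, zero_add]; exact .rfl
    · simpa [hy] using Ioc_ae_eq_Icc
  · obtain ⟨y, hy⟩ := not_forall.1 hc
    have hyS : y ∉ S := fun h => hy (by simpa [h] using ht0)
    have ht : t = 1 := by simp only [hyS, if_false] at hy; linarith
    rw [Finset.prod_eq_zero (Finset.mem_univ y) (ENNReal.ofReal_eq_zero.2 (not_lt.1 hy)),
      zero_mul, Set.univ_pi_eq_empty (i := y) (by simp [hyS, ht]), Set.inter_empty,
      measure_empty]

lemma prod_ofReal_thinnedSet (b : {y // y ≠ x} → Bool) :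
    ∏ y, ENNReal.ofReal (if y ∈ thinnedSet x b then t else 1 - t) =
      ENNReal.ofReal t * ∏ y : {y // y ≠ x}, ENNReal.ofReal (if b y then t else 1 - t) := by
  rw [Fintype.prod_eq_mul_prod_subtype_ne _ x, if_pos (self_mem_thinnedSet b)]
  simp only [mem_thinnedSet_iff]

variable [PartialOrder P]

lemma pi_uniform_isGreedyMaxOn_univ_inter_sublevel (hx : IsMax x) {S : Set P} (hxS : x ∈ S)
    (ht0 : 0 < t) (ht1 : t ≤ 1) :
    μU ({w | IsGreedyMaxOn w Set.univ x} ∩ {w | {y | w y ≤ t} = S}) =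
      (∏ y, ENNReal.ofReal (if y ∈ S then t else 1 - t)) * μU {w | IsGreedyMaxOn w S x} := by
  have hrestrict :
      ({w | IsGreedyMaxOn w Set.univ x} ∩ {w | {y | w y ≤ t} = S} : Set (P → ℝ)) =ᵐ[μU]
        ({w | IsGreedyMaxOn w S x} ∩ {w | {y | w y ≤ t} = S} : Set (P → ℝ)) := by
    filter_upwards [ae_injective_pi_uniform] with w hw
    refine propext (and_congr_left fun hS => ?_)
    subst hS
    exact (isGreedyMaxOn_iff_isGreedyMaxOn_univ hw hx hxS fun y hy => hy.trans hxS).symm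
  -- On `S` the rescaling is `w ↦ t * w`, which does not change the greedy chain.
  have hscale : (fun w => (fun y => if y ∈ S then 0 else t) +
      (fun y => if y ∈ S then t else 1 - t) * w) ⁻¹' {w | IsGreedyMaxOn w S x} =ᵐ[μU]
        {w | IsGreedyMaxOn w S x} := by
    filter_upwards [ae_injective_pi_uniform] with w hw
    exact propext (isGreedyMaxOn_congr hw.injOn
      (fun a ha b hb => by simp [ha, hb, mul_le_mul_iff_right₀ ht0]) x)
  rw [measure_congr hrestrict, pi_uniform_inter_sublevel S ht0 ht1, measure_congr hscale]

lemma pi_uniform_isGreedyMaxOn_univ_and_le (hx : IsMax x) (ht0 : 0 < t) (ht1 : t ≤ 1) :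
    μU {w | IsGreedyMaxOn w Set.univ x ∧ w x ≤ t} =
      ∑ b : {y // y ≠ x} → Bool,
        (∏ y, ENNReal.ofReal (if y ∈ thinnedSet x b then t else 1 - t)) *
          μU {w | IsGreedyMaxOn w (thinnedSet x b) x} := by
  set M : ({y // y ≠ x} → Bool) → Set (P → ℝ) :=
    fun b => {w | ∀ y : {y // y ≠ x}, w y ≤ t ↔ b y = true}
  have hmeas (b : {y // y ≠ x} → Bool) : MeasurableSet (M b) := by
    simp only [M, Set.ofPred_forall]
    exact MeasurableSet.iInter fun y => measurableSet_setOfPred.2 <|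
      (measurableSet_setOfPred.1 (measurableSet_le (measurable_pi_apply _) measurable_const)).iff
        measurable_const
  have hdisj : Pairwise (Disjoint on M) := fun b b' hbb' => Set.disjoint_left.2 fun w hb hb' =>
    hbb' (funext fun y => Bool.eq_iff_iff.2 ((hb y).symm.trans (hb' y)))
  have hcov : ⋃ b, M b = Set.univ :=
    Set.eq_univ_of_forall fun w => Set.mem_iUnion.2 ⟨fun y => decide (w y ≤ t), by simp [M]⟩
  rw [measure_eq_sum_inter μU hmeas hdisj hcov]
  refine Finset.sum_congr rfl fun b _ => ?_
  rw [Set.ofPred_and, Set.inter_assoc, setOf_le_inter_setOf_forall_le_iff,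
    pi_uniform_isGreedyMaxOn_univ_inter_sublevel hx (self_mem_thinnedSet b) ht0 ht1]

end Thinning

lemma bernoulli_toMeasure_singleton {t : ℝ} (ht0 : 0 ≤ t) (h : Real.toNNReal t ≤ 1)
    (c : Bool) :
    (PMF.bernoulli (Real.toNNReal t) h).toMeasure {c} =
      ENNReal.ofReal (if c then t else 1 - t) := by
  rw [PMF.toMeasure_apply_singleton _ _ (measurableSet_singleton c)]
  cases c
  · change 1 - ENNReal.ofReal t = _
    rw [if_neg Bool.false_ne_true, ENNReal.ofReal_sub _ ht0, ENNReal.ofReal_one]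
  · rfl

/-- For a maximal element `x` and `0 < t ≤ 1`, if every other element is
kept independently with probability `t` and the weights are independent uniform on `[0,1]`,
then the probability that `x` is the greedy maximum of the induced partial order on the kept
elements (together with `x`) equals `μ_t(x)`. -/
theorem greedy_max_thinned_eq_muCond (P : Type) [Fintype P] [PartialOrder P]
    (x : P) (hx : IsMax x) {t : ℝ} (ht0 : 0 < t) (ht1 : t ≤ 1) :
    ((Measure.pi fun _ : P => volume.restrict (Set.Icc (0:ℝ) 1)).prod
        (Measure.pi fun _ : {y : P // y ≠ x} =>
          (PMF.bernoulli (Real.toNNReal t)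
            (by simpa using Real.toNNReal_le_one.mpr ht1)).toMeasure))
      {ω : (P → ℝ) × ({y : P // y ≠ x} → Bool) |
        IsGreedyMaxOn ω.1 {y | y = x ∨ ∃ h : y ≠ x, ω.2 ⟨y, h⟩ = true} x} =
      muGreedyCond P t x := by
  refine (measure_prod_setOf_mem_eq_sum _ _
    fun b => {w | IsGreedyMaxOn w (thinnedSet x b) x}).trans ?_
  rw [muGreedyCond, pi_uniform_setOf_apply_le ht1,
    pi_uniform_isGreedyMaxOn_univ_and_le hx ht0 ht1]
  simp_rw [prod_ofReal_thinnedSet, Measure.pi_singleton, bernoulli_toMeasure_singleton ht0.le,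
    mul_assoc, ← Finset.mul_sum, mul_comm (∏ _, _), mul_comm (ENNReal.ofReal t)]
  exact (ENNReal.mul_div_cancel_right (ENNReal.ofReal_pos.2 ht0).ne' ENNReal.ofReal_ne_top).symm
end
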